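/- Under one permutation hashing with N_mat matched bins and N_emp jointly empty bins (k bins, random permutation of D elements, sets of sizes f₁, f₂ with intersection a, f = f₁+f₂-a ≥ 1, R = a/f), the estimator R̂ = N_mat/(k - N_emp) satisfies E(R̂) = R. -/
import Mathlib


open scoped BigOperators Classical

/-- Restriction of the hashed set `S` to the `j`-th of `k` equal consecutive bins of
`{0,...,D-1}` (each bin has length `D/k`). -/
def hashBin (D k : ℕ) (S : Finset (Fin D)) (j : ℕ) : Finset (Fin D) :=
  S.filter (fun x => x.val / (D / k) = j)

/-- The `j`-th bin is matched: both `π(S₁)` and `π(S₂)` are nonempty in the bin and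
their smallest elements in the bin coincide. -/
def matchedBin (D k : ℕ) (π : Equiv.Perm (Fin D)) (S₁ S₂ : Finset (Fin D)) (j : ℕ) : Prop :=
  (hashBin D k (S₁.image π) j).Nonempty ∧ (hashBin D k (S₂.image π) j).Nonempty ∧
    (hashBin D k (S₁.image π) j).min = (hashBin D k (S₂.image π) j).min

/-- The number of matched bins. -/
noncomputable def Nmat (D k : ℕ) (π : Equiv.Perm (Fin D)) (S₁ S₂ : Finset (Fin D)) : ℕ :=
  ((Finset.range k).filter (fun j => matchedBin D k π S₁ S₂ j)).card

/-- The number of jointly empty bins: bins where both `π(S₁)` and `π(S₂)` are empty. -/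
noncomputable def NempJ (D k : ℕ) (π : Equiv.Perm (Fin D)) (S₁ S₂ : Finset (Fin D)) : ℕ :=
  ((Finset.range k).filter (fun j =>
    hashBin D k (S₁.image π) j = ∅ ∧ hashBin D k (S₂.image π) j = ∅)).card

section Aux

open Finset Equiv

lemma mem_hashBin {D k : ℕ} {A : Finset (Fin D)} {j : ℕ} {x : Fin D} :
    x ∈ hashBin D k A j ↔ x ∈ A ∧ x.val / (D / k) = j := Finset.mem_filter

lemma mem_image_perm {D : ℕ} {π : Equiv.Perm (Fin D)} {S : Finset (Fin D)} {m : Fin D} :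
    m ∈ S.image ⇑π ↔ π.symm m ∈ S := by
  constructor
  · intro h
    obtain ⟨x, hx, rfl⟩ := Finset.mem_image.1 h
    simpa using hx
  · intro h
    exact Finset.mem_image.2 ⟨π.symm m, h, π.apply_symm_apply m⟩

lemma hashBin_union {D k : ℕ} (A B : Finset (Fin D)) (j : ℕ) :
    hashBin D k (A ∪ B) j = hashBin D k A j ∪ hashBin D k B j :=
  Finset.filter_union _ _ _

lemma matched_iff {D k : ℕ} (π : Equiv.Perm (Fin D)) (S₁ S₂ : Finset (Fin D)) (j : ℕ) :
    matchedBin D k π S₁ S₂ j ↔ ∃ m : Fin D,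
      (hashBin D k ((S₁ ∪ S₂).image ⇑π) j).min = (m : WithTop (Fin D)) ∧
      π.symm m ∈ S₁ ∧ π.symm m ∈ S₂ := by
  rw [Finset.image_union, hashBin_union]
  set B₁ := hashBin D k (S₁.image ⇑π) j with hB₁
  set B₂ := hashBin D k (S₂.image ⇑π) j with hB₂
  constructor
  · rintro ⟨h1, h2, hmin⟩
    obtain ⟨m, hm⟩ := Finset.min_of_nonempty h1
    have hm1 : m ∈ B₁ := Finset.mem_of_min hm
    have hm2 : m ∈ B₂ := Finset.mem_of_min (show B₂.min = (m : WithTop (Fin D)) from hmin ▸ hm)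
    refine ⟨m, ?_, ?_, ?_⟩
    · refine le_antisymm (Finset.min_le (Finset.mem_union_left _ hm1)) (Finset.le_min ?_)
      intro b hb
      rcases Finset.mem_union.1 hb with hb | hb
      · exact hm ▸ Finset.min_le hb
      · exact (show B₂.min = (m : WithTop (Fin D)) from hmin ▸ hm) ▸ Finset.min_le hb
    · exact mem_image_perm.1 (mem_hashBin.1 hm1).1
    · exact mem_image_perm.1 (mem_hashBin.1 hm2).1
  · rintro ⟨m, hmin, hm1, hm2⟩
    have hmU : m ∈ B₁ ∪ B₂ := Finset.mem_of_min hmin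
    have hbin : m.val / (D / k) = j := by
      rcases Finset.mem_union.1 hmU with hb | hb
      · exact (mem_hashBin.1 hb).2
      · exact (mem_hashBin.1 hb).2
    have hm1' : m ∈ B₁ := mem_hashBin.2 ⟨mem_image_perm.2 hm1, hbin⟩
    have hm2' : m ∈ B₂ := mem_hashBin.2 ⟨mem_image_perm.2 hm2, hbin⟩
    have min1 : B₁.min = (m : WithTop (Fin D)) := by
      refine le_antisymm (Finset.min_le hm1') (Finset.le_min ?_)
      intro b hb
      exact hmin ▸ Finset.min_le (Finset.mem_union_left _ hb)
    have min2 : B₂.min = (m : WithTop (Fin D)) := by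
      refine le_antisymm (Finset.min_le hm2') (Finset.le_min ?_)
      intro b hb
      exact hmin ▸ Finset.min_le (Finset.mem_union_right _ hb)
    exact ⟨⟨m, hm1'⟩, ⟨m, hm2'⟩, min1.trans min2.symm⟩

lemma fiber_const {α : Type*} [Fintype α] [DecidableEq α] (x₀ y y' : α) :
    (Finset.univ.filter fun σ : Equiv.Perm α => σ x₀ = y).card
      = (Finset.univ.filter fun σ : Equiv.Perm α => σ x₀ = y').card := by
  refine Finset.card_bij' (fun σ _ => Equiv.swap y y' * σ) (fun σ _ => Equiv.swap y y' * σ)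
    ?_ ?_ ?_ ?_
  · intro σ hσ
    simp only [Finset.mem_filter, Finset.mem_univ, true_and] at hσ ⊢
    simp [Equiv.Perm.mul_apply, hσ]
  · intro σ hσ
    simp only [Finset.mem_filter, Finset.mem_univ, true_and] at hσ ⊢
    simp [Equiv.Perm.mul_apply, hσ]
  · intro σ _
    simp [← mul_assoc]
  · intro σ _
    simp [← mul_assoc]

lemma card_perm_eq {α : Type*} [Fintype α] [DecidableEq α] (x₀ : α) :
    Fintype.card (Equiv.Perm α)
      = Fintype.card α * (Finset.univ.filter fun σ : Equiv.Perm α => σ x₀ = x₀).card := by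
  have h := Finset.card_eq_sum_card_fiberwise
    (f := fun σ : Equiv.Perm α => σ x₀) (s := Finset.univ) (t := Finset.univ)
    (fun σ _ => Finset.mem_univ _)
  rw [Finset.card_univ] at h
  rw [h]
  beta_reduce
  rw [Finset.sum_congr rfl (fun y _ => fiber_const x₀ y x₀), Finset.sum_const,
    Finset.card_univ, smul_eq_mul]

lemma count_P {α : Type*} [Fintype α] [DecidableEq α] (x₀ : α) (P : α → Prop) [DecidablePred P] :
    (Finset.univ.filter fun σ : Equiv.Perm α => P (σ x₀)).card * Fintype.card α
      = (Finset.univ.filter P).card * Fintype.card (Equiv.Perm α) := by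
  have h := Finset.card_eq_sum_card_fiberwise
    (f := fun σ : Equiv.Perm α => σ x₀) (s := Finset.univ.filter fun σ => P (σ x₀))
    (t := Finset.univ.filter P)
    (fun σ hσ => Finset.mem_filter.2 ⟨Finset.mem_univ _, (Finset.mem_filter.1 hσ).2⟩)
  have h2 : ∀ y ∈ Finset.univ.filter P,
      ((Finset.univ.filter fun σ : Equiv.Perm α => P (σ x₀)).filter
        (fun σ => σ x₀ = y)).card
      = (Finset.univ.filter fun σ : Equiv.Perm α => σ x₀ = x₀).card := by
    intro y hy
    have hy' : P y := (Finset.mem_filter.1 hy).2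
    have he : (Finset.univ.filter fun σ : Equiv.Perm α => P (σ x₀)).filter (fun σ => σ x₀ = y)
        = Finset.univ.filter fun σ : Equiv.Perm α => σ x₀ = y := by
      rw [Finset.filter_filter]
      refine Finset.filter_congr fun σ _ => ?_
      constructor
      · exact fun h => h.2
      · exact fun h => ⟨h ▸ hy', h⟩
    rw [he]
    exact fiber_const x₀ y x₀
  rw [h]
  beta_reduce
  rw [Finset.sum_congr rfl h2, Finset.sum_const, smul_eq_mul, card_perm_eq x₀]
  ring

lemma count_P_inv {α : Type*} [Fintype α] [DecidableEq α] (x₀ : α) (P : α → Prop)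
    [DecidablePred P] :
    (Finset.univ.filter fun σ : Equiv.Perm α => P (σ⁻¹ x₀)).card
      = (Finset.univ.filter fun σ : Equiv.Perm α => P (σ x₀)).card := by
  refine Finset.card_bij' (fun σ _ => σ⁻¹) (fun σ _ => σ⁻¹) ?_ ?_ ?_ ?_
  · intro σ hσ
    simp only [Finset.mem_filter, Finset.mem_univ, true_and] at hσ ⊢
    simpa using hσ
  · intro σ hσ
    simp only [Finset.mem_filter, Finset.mem_univ, true_and] at hσ ⊢
    simpa using hσ
  · intro σ _; simp
  · intro σ _; simp

end Aux

/-- The estimator `R̂ = N_mat/(k - N_emp)` of the resemblance is unbiased: `E(R̂) = R`. -/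
theorem stmt_11 (D k f₁ f₂ a f : ℕ) (R : ℝ) (hk : 1 ≤ k) (hkD : k ∣ D)
    (S₁ S₂ : Finset (Fin D)) (h₁ : S₁.card = f₁) (h₂ : S₂.card = f₂)
    (ha : (S₁ ∩ S₂).card = a) (hf : (S₁ ∪ S₂).card = f) (hfeq : f = f₁ + f₂ - a)
    (hf1 : 1 ≤ f) (hR : R = (a : ℝ) / f) :
    (∑ π : Equiv.Perm (Fin D),
        (Nmat D k π S₁ S₂ : ℝ) / ((k : ℝ) - NempJ D k π S₁ S₂)) /
      (Fintype.card (Equiv.Perm (Fin D)) : ℝ) = R := by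
  classical
  subst h₁ h₂ ha hf hR
  set S : Finset (Fin D) := S₁ ∪ S₂ with hS
  have hSne : S.Nonempty := Finset.card_pos.1 hf1
  have hD0 : 0 < D := by
    obtain ⟨x, _⟩ := hSne
    exact x.pos
  have hDk : 0 < D / k := Nat.div_pos (Nat.le_of_dvd hD0 hkD) (by omega)
  set A := S₁ ∩ S₂ with hA
  set cS : ℝ := (S.card : ℝ) with hcS
  have hcS0 : 0 < cS := by
    have : 0 < S.card := hf1
    rw [hcS]
    exact_mod_cast this
  set cP : ℝ := (Fintype.card (Equiv.Perm {x // x ∈ S}) : ℝ) with hcP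
  have hcP0 : 0 < cP := by
    have : 0 < Fintype.card (Equiv.Perm {x // x ∈ S}) := Fintype.card_pos
    rw [hcP]
    exact_mod_cast this
  -- image of S under a permutation supported in S
  have hιS : ∀ σ : Equiv.Perm {x // x ∈ S},
      S.image ⇑(Equiv.Perm.ofSubtype σ) = S := by
    intro σ
    apply Finset.eq_of_subset_of_card_le
    · intro y hy
      obtain ⟨x, hx, rfl⟩ := Finset.mem_image.1 hy
      rw [Equiv.Perm.ofSubtype_apply_of_mem σ hx]
      exact (σ ⟨x, hx⟩).2
    · rw [Finset.card_image_of_injective _ (Equiv.injective _)]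
  have himg : ∀ (π : Equiv.Perm (Fin D)) (σ : Equiv.Perm {x // x ∈ S}),
      S.image ⇑(π * Equiv.Perm.ofSubtype σ) = S.image ⇑π := by
    intro π σ
    rw [Equiv.Perm.coe_mul, ← Finset.image_image, hιS]
  -- the key coset computation
  have key : ∀ π : Equiv.Perm (Fin D),
      ∑ σ : Equiv.Perm {x // x ∈ S},
        ((Nmat D k (π * Equiv.Perm.ofSubtype σ) S₁ S₂ : ℝ) /
          ((k : ℝ) - NempJ D k (π * Equiv.Perm.ofSubtype σ) S₁ S₂))
      = ((A.card : ℝ) / cS) * cP := by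
    intro π
    set T := S.image ⇑π with hT
    set nb := ((Finset.range k).filter fun j => (hashBin D k T j).Nonempty).card with hnb
    have hnbk : nb ≤ k := by
      calc nb ≤ (Finset.range k).card := Finset.card_filter_le _ _
        _ = k := Finset.card_range k
    have hnb1 : 0 < nb := by
      obtain ⟨x, hx⟩ := hSne
      have hxT : π x ∈ T := Finset.mem_image_of_mem _ hx
      refine Finset.card_pos.2 ⟨(π x).val / (D / k), ?_⟩
      refine Finset.mem_filter.2 ⟨Finset.mem_range.2 ?_, ⟨π x, mem_hashBin.2 ⟨hxT, rfl⟩⟩⟩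
      rw [Nat.div_lt_iff_lt_mul hDk]
      calc (π x).val < D := (π x).isLt
        _ = k * (D / k) := (Nat.mul_div_cancel' hkD).symm
    have hnbR : 0 < (nb : ℝ) := by exact_mod_cast hnb1
    -- denominator is constant on the coset
    have hden : ∀ σ : Equiv.Perm {x // x ∈ S},
        (k : ℝ) - NempJ D k (π * Equiv.Perm.ofSubtype σ) S₁ S₂ = nb := by
      intro σ
      have himgσ : (S₁ ∪ S₂).image ⇑(π * Equiv.Perm.ofSubtype σ) = T := himg π σ
      have hfe : ((Finset.range k).filter fun j =>
            hashBin D k (S₁.image ⇑(π * Equiv.Perm.ofSubtype σ)) j = ∅ ∧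
            hashBin D k (S₂.image ⇑(π * Equiv.Perm.ofSubtype σ)) j = ∅)
          = ((Finset.range k).filter fun j => ¬ (hashBin D k T j).Nonempty) := by
        apply Finset.filter_congr
        intro j _
        rw [Finset.not_nonempty_iff_eq_empty, ← himgσ, Finset.image_union, hashBin_union,
          Finset.union_eq_empty]
      have hsum : nb + NempJ D k (π * Equiv.Perm.ofSubtype σ) S₁ S₂ = k := by
        rw [NempJ, hfe, hnb]
        rw [Finset.card_filter_add_card_filter_not, Finset.card_range]
      have : (NempJ D k (π * Equiv.Perm.ofSubtype σ) S₁ S₂ : ℝ) = (k : ℝ) - nb := by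
        have : NempJ D k (π * Equiv.Perm.ofSubtype σ) S₁ S₂ = k - nb := by omega
        rw [this]
        push_cast [Nat.cast_sub hnbk]
        ring
      rw [this]; ring
    -- numerator sum
    have hnum : ∀ j ∈ Finset.range k,
        ∑ σ : Equiv.Perm {x // x ∈ S},
          (if matchedBin D k (π * Equiv.Perm.ofSubtype σ) S₁ S₂ j then (1 : ℝ) else 0)
        = if (hashBin D k T j).Nonempty then ((A.card : ℝ) * cP) / cS else 0 := by
      intro j _
      by_cases hU : (hashBin D k T j).Nonempty
      · rw [if_pos hU]
        obtain ⟨m, hm⟩ := Finset.min_of_nonempty hU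
        have hmT : m ∈ T := (mem_hashBin.1 (Finset.mem_of_min hm)).1
        have hs₀ : π.symm m ∈ S := mem_image_perm.1 hmT
        set x₀ : {x // x ∈ S} := ⟨π.symm m, hs₀⟩ with hx₀
        have hiff : ∀ σ : Equiv.Perm {x // x ∈ S},
            matchedBin D k (π * Equiv.Perm.ofSubtype σ) S₁ S₂ j ↔ ((σ⁻¹ x₀ : Fin D) ∈ A) := by
          intro σ
          rw [matched_iff]
          have himgσ : (S₁ ∪ S₂).image ⇑(π * Equiv.Perm.ofSubtype σ) = T := himg π σ
          rw [himgσ]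
          have hsymm : (π * Equiv.Perm.ofSubtype σ).symm m = ((σ⁻¹ x₀ : {x // x ∈ S}) : Fin D) := by
            have h1 : (π * Equiv.Perm.ofSubtype σ).symm m
                = (Equiv.Perm.ofSubtype σ).symm (π.symm m) := rfl
            rw [h1]
            have h2 : (Equiv.Perm.ofSubtype σ).symm = ⇑(Equiv.Perm.ofSubtype σ⁻¹) := by
              rw [map_inv]; rfl
            rw [h2, Equiv.Perm.ofSubtype_apply_of_mem σ⁻¹ hs₀]
          constructor
          · rintro ⟨m', hm', h1, h2⟩
            have : m' = m := by
              rw [hm] at hm'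
              exact_mod_cast hm'.symm
            subst this
            rw [hsymm] at h1 h2
            exact Finset.mem_inter.2 ⟨h1, h2⟩
          · intro hmem
            refine ⟨m, hm, ?_, ?_⟩
            · rw [hsymm]; exact (Finset.mem_inter.1 hmem).1
            · rw [hsymm]; exact (Finset.mem_inter.1 hmem).2
        rw [Finset.sum_congr rfl (fun σ _ => by rw [if_congr (hiff σ) rfl rfl])]
        rw [Finset.sum_boole]
        have hcount := count_P (α := {x // x ∈ S}) x₀ (fun y => (y : Fin D) ∈ A)
        have hcinv := count_P_inv (α := {x // x ∈ S}) x₀ (fun y => (y : Fin D) ∈ A)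
        have hAcard : (Finset.univ.filter fun y : {x // x ∈ S} => (y : Fin D) ∈ A).card
            = A.card := by
          refine Finset.card_bij' (fun y _ => (y : Fin D)) (fun x hx =>
            (⟨x, Finset.mem_union_left _ (Finset.mem_inter.1 hx).1⟩ :
              {x // x ∈ S})) ?_ ?_ ?_ ?_
          · intro y hy
            simp only [Finset.mem_filter, Finset.mem_univ, true_and] at hy
            exact hy
          · intro x hx
            exact Finset.mem_filter.2 ⟨Finset.mem_univ _, hx⟩
          · intro y _; rfl
          · intro x _; rfl
        have hcardcoe : Fintype.card {x // x ∈ S} = S.card := Fintype.card_coe S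
        have hnat : (Finset.univ.filter fun σ : Equiv.Perm {x // x ∈ S} =>
            ((σ⁻¹ x₀ : {x // x ∈ S}) : Fin D) ∈ A).card * S.card
            = A.card * Fintype.card (Equiv.Perm {x // x ∈ S}) := by
          rw [hcinv, ← hcardcoe, ← hAcard]
          exact hcount
        have hreal : ((Finset.univ.filter fun σ : Equiv.Perm {x // x ∈ S} =>
            ((σ⁻¹ x₀ : {x // x ∈ S}) : Fin D) ∈ A).card : ℝ) * cS = (A.card : ℝ) * cP := by
          rw [hcS, hcP]
          exact_mod_cast hnat
        rw [eq_div_iff (ne_of_gt hcS0)]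
        exact hreal
      · rw [if_neg hU]
        refine Finset.sum_eq_zero fun σ _ => ?_
        rw [if_neg]
        intro hmat
        obtain ⟨m, hm', _, _⟩ := (matched_iff _ _ _ _).1 hmat
        rw [himg π σ] at hm'
        exact hU ⟨m, Finset.mem_of_min hm'⟩
    -- assemble
    have hNmat : ∀ σ : Equiv.Perm {x // x ∈ S},
        (Nmat D k (π * Equiv.Perm.ofSubtype σ) S₁ S₂ : ℝ)
        = ∑ j ∈ Finset.range k,
            (if matchedBin D k (π * Equiv.Perm.ofSubtype σ) S₁ S₂ j then (1 : ℝ) else 0) := by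
      intro σ
      rw [Nmat, Finset.sum_boole]
    calc ∑ σ : Equiv.Perm {x // x ∈ S},
          ((Nmat D k (π * Equiv.Perm.ofSubtype σ) S₁ S₂ : ℝ) /
            ((k : ℝ) - NempJ D k (π * Equiv.Perm.ofSubtype σ) S₁ S₂))
        = ∑ σ : Equiv.Perm {x // x ∈ S},
            (∑ j ∈ Finset.range k,
              (if matchedBin D k (π * Equiv.Perm.ofSubtype σ) S₁ S₂ j then (1 : ℝ) else 0)) / nb := by
          refine Finset.sum_congr rfl fun σ _ => ?_
          rw [hden σ, hNmat σ]
      _ = (∑ j ∈ Finset.range k, ∑ σ : Equiv.Perm {x // x ∈ S},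
            (if matchedBin D k (π * Equiv.Perm.ofSubtype σ) S₁ S₂ j then (1 : ℝ) else 0)) / nb := by
          rw [← Finset.sum_div, Finset.sum_comm]
      _ = (∑ j ∈ Finset.range k,
            if (hashBin D k T j).Nonempty then ((A.card : ℝ) * cP) / cS else 0) / nb := by
          rw [Finset.sum_congr rfl hnum]
      _ = ((nb : ℝ) * (((A.card : ℝ) * cP) / cS)) / nb := by
          rw [← Finset.sum_filter, Finset.sum_const, ← hnb, nsmul_eq_mul]
      _ = ((A.card : ℝ) / cS) * cP := by
          rw [mul_comm, mul_div_assoc, div_self (ne_of_gt hnbR), mul_one]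
          ring
  have step1 : ∀ σ : Equiv.Perm {x // x ∈ S},
      (∑ π : Equiv.Perm (Fin D),
        (Nmat D k (π * Equiv.Perm.ofSubtype σ) S₁ S₂ : ℝ) /
          ((k : ℝ) - NempJ D k (π * Equiv.Perm.ofSubtype σ) S₁ S₂))
      = ∑ π : Equiv.Perm (Fin D),
          (Nmat D k π S₁ S₂ : ℝ) / ((k : ℝ) - NempJ D k π S₁ S₂) := by
    intro σ
    exact Equiv.sum_comp (Equiv.mulRight (Equiv.Perm.ofSubtype σ))
      (fun ρ => (Nmat D k ρ S₁ S₂ : ℝ) / ((k : ℝ) - NempJ D k ρ S₁ S₂))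
  have hmain : (∑ π : Equiv.Perm (Fin D),
      (Nmat D k π S₁ S₂ : ℝ) / ((k : ℝ) - NempJ D k π S₁ S₂)) * cP
      = (Fintype.card (Equiv.Perm (Fin D)) : ℝ) * (((A.card : ℝ) / cS) * cP) := by
    have h1 : (∑ σ : Equiv.Perm {x // x ∈ S}, ∑ π : Equiv.Perm (Fin D),
        (Nmat D k (π * Equiv.Perm.ofSubtype σ) S₁ S₂ : ℝ) /
          ((k : ℝ) - NempJ D k (π * Equiv.Perm.ofSubtype σ) S₁ S₂))
        = (∑ π : Equiv.Perm (Fin D),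
            (Nmat D k π S₁ S₂ : ℝ) / ((k : ℝ) - NempJ D k π S₁ S₂)) * cP := by
      rw [Finset.sum_congr rfl (fun σ _ => step1 σ), Finset.sum_const, Finset.card_univ,
        nsmul_eq_mul, ← hcP, mul_comm]
    have h2 : (∑ σ : Equiv.Perm {x // x ∈ S}, ∑ π : Equiv.Perm (Fin D),
        (Nmat D k (π * Equiv.Perm.ofSubtype σ) S₁ S₂ : ℝ) /
          ((k : ℝ) - NempJ D k (π * Equiv.Perm.ofSubtype σ) S₁ S₂))
        = ∑ π : Equiv.Perm (Fin D), ∑ σ : Equiv.Perm {x // x ∈ S},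
            (Nmat D k (π * Equiv.Perm.ofSubtype σ) S₁ S₂ : ℝ) /
              ((k : ℝ) - NempJ D k (π * Equiv.Perm.ofSubtype σ) S₁ S₂) := Finset.sum_comm
    have h3 : (∑ π : Equiv.Perm (Fin D), ∑ σ : Equiv.Perm {x // x ∈ S},
        (Nmat D k (π * Equiv.Perm.ofSubtype σ) S₁ S₂ : ℝ) /
          ((k : ℝ) - NempJ D k (π * Equiv.Perm.ofSubtype σ) S₁ S₂))
        = ∑ _π : Equiv.Perm (Fin D), (((A.card : ℝ) / cS) * cP) :=
      Finset.sum_congr rfl (fun π _ => key π)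
    rw [← h1, h2, h3, Finset.sum_const, Finset.card_univ, nsmul_eq_mul]
  have hG0 : 0 < (Fintype.card (Equiv.Perm (Fin D)) : ℝ) := by
    have : 0 < Fintype.card (Equiv.Perm (Fin D)) := Fintype.card_pos
    exact_mod_cast this
  have hsum : (∑ π : Equiv.Perm (Fin D),
      (Nmat D k π S₁ S₂ : ℝ) / ((k : ℝ) - NempJ D k π S₁ S₂))
      = (Fintype.card (Equiv.Perm (Fin D)) : ℝ) * ((A.card : ℝ) / cS) := by
    have h2 : (∑ π : Equiv.Perm (Fin D),
        (Nmat D k π S₁ S₂ : ℝ) / ((k : ℝ) - NempJ D k π S₁ S₂)) * cP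
        = ((Fintype.card (Equiv.Perm (Fin D)) : ℝ) * ((A.card : ℝ) / cS)) * cP := by
      rw [hmain]; ring
    exact mul_right_cancel₀ (ne_of_gt hcP0) h2
  rw [hsum, hcS, mul_comm, mul_div_assoc, div_self (ne_of_gt hG0), mul_one]
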